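/- For any vector Γ̃ ∈ ℝ^N with positive entries, a feasible point x* (with aᵀx* = b) is a stationary point of min { f(x) + h(x) : aᵀx = b } (i.e. there exists λ* with 0 ∈ ∇f(x*) + ∂h(x*) + λ* a) if and only if d_{NΓ̃}(x*) = 0, where d_{NΓ̃}(x*) = argmin_{s : aᵀs = 0} f(x*) + ⟨∇f(x*), s⟩ + (N/2)‖s‖_{Γ̃}² + h(x* + s). -/

import Mathlib

/-!
At a stationary point `x*` the function `ψ y = ⟪∇f(x*), y⟫ + h y` satisfies
`ψ x* ≤ ψ y + λ ⟪a, y - x*⟫`, so the subproblem objective at `s ∈ S` is at least its value at `0`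
plus `(N/2)‖s‖²_Γ̃`, which forces `d = 0`. Conversely, if `0` minimizes the subproblem over `S`,
then comparing with `t • s` and letting `t → 0⁺` removes the quadratic term by convexity, so
`x*` minimizes `ψ` on the hyperplane `x* + S`. A convex function minimized on a hyperplane
`ℓ = const` admits a multiplier: for `ℓ u > 0 > ℓ w`, the point of the segment `[u, w]` on the
hyperplane shows that every slope `(ψ x* - ψ (x* + u)) / ℓ u` is at most every slope
`(ψ (x* + w) - ψ x*) / (-ℓ w)`, and `λ` is the supremum of the former.
-/

open scoped BigOperators RealInnerProductSpace
open Finset Filter Topology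

noncomputable section

abbrev En (n : ℕ) := EuclideanSpace ℝ (Fin n)

/-- Projection onto block `i` of the block decomposition of `ℝ^n` given by the
block-index map `blk : Fin n → Fin N`; it realizes `U_i U_iᵀ y`. -/
def blockProj {n N : ℕ} (blk : Fin n → Fin N) (i : Fin N) (y : En n) : En n :=
  WithLp.toLp 2 (fun j => if blk j = i then y j else 0)

/-- The squared block norm `‖x‖_L² = ∑ i, L i ‖x_i‖²`. -/
def blockNormSq {n N : ℕ} (blk : Fin n → Fin N) (L : Fin N → ℝ) (x : En n) : ℝ :=
  ∑ i, L i * ‖blockProj blk i x‖ ^ 2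

def IsSubgradientAt {n : ℕ} (h : En n → ℝ) (gh x : En n) : Prop :=
  ∀ y, h x + ⟪gh, y - x⟫ ≤ h y

section BlockNorm

variable {n N : ℕ} (blk : Fin n → Fin N)

@[simp]
lemma blockProj_apply (i : Fin N) (y : En n) (j : Fin n) :
    blockProj blk i y j = if blk j = i then y j else 0 := rfl

lemma blockProj_smul (i : Fin N) (t : ℝ) (y : En n) :
    blockProj blk i (t • y) = t • blockProj blk i y := by
  ext j
  by_cases hj : blk j = i <;> simp [hj]

lemma blockNormSq_smul (L : Fin N → ℝ) (t : ℝ) (x : En n) :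
    blockNormSq blk L (t • x) = t ^ 2 * blockNormSq blk L x := by
  simp only [blockNormSq, blockProj_smul, norm_smul, mul_pow, Real.norm_eq_abs, sq_abs,
    Finset.mul_sum]
  exact Finset.sum_congr rfl fun _ _ => by ring

@[simp]
lemma blockNormSq_zero (L : Fin N → ℝ) : blockNormSq blk L 0 = 0 := by
  simpa using blockNormSq_smul blk L 0 0

variable {L : Fin N → ℝ}

lemma blockNormSq_nonneg (hL : ∀ i, 0 ≤ L i) (x : En n) : 0 ≤ blockNormSq blk L x :=
  Finset.sum_nonneg fun i _ => mul_nonneg (hL i) (sq_nonneg _)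

lemma blockNormSq_eq_zero_iff (hL : ∀ i, 0 < L i) {x : En n} :
    blockNormSq blk L x = 0 ↔ x = 0 := by
  refine ⟨fun hx => ?_, fun hx => hx ▸ blockNormSq_zero blk L⟩
  have hblock : ∀ i, blockProj blk i x = 0 := fun i => by
    have := (Finset.sum_eq_zero_iff_of_nonneg fun i _ =>
      mul_nonneg (hL i).le (sq_nonneg ‖blockProj blk i x‖)).mp hx i (Finset.mem_univ i)
    simpa [(hL i).ne'] using this
  ext j
  simpa using congrArg (· j) (hblock (blk j))

end BlockNorm

lemma convexOn_sum_comp_coord {ι : Type*} [Fintype ι] {H : ι → ℝ → ℝ}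
    (hH : ∀ i, ConvexOn ℝ Set.univ (H i)) :
    ConvexOn ℝ Set.univ fun x : EuclideanSpace ℝ ι => ∑ i, H i (x i) := by
  refine ⟨convex_univ, fun x _ y _ p q hp hq hpq => ?_⟩
  calc ∑ i, H i ((p • x + q • y) i)
      ≤ ∑ i, (p • H i (x i) + q • H i (y i)) := Finset.sum_le_sum fun i _ =>
        (hH i).2 (Set.mem_univ _) (Set.mem_univ _) hp hq hpq
    _ = p • ∑ i, H i (x i) + q • ∑ i, H i (y i) := by
        rw [Finset.sum_add_distrib, Finset.smul_sum, Finset.smul_sum]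

section Convex

variable {E : Type*} [AddCommGroup E] [Module ℝ E] {ψ : E → ℝ}

lemma ConvexOn.le_of_le_add_quadratic (hψ : ConvexOn ℝ Set.univ ψ) {Q : E → ℝ}
    (hQ : ∀ (t : ℝ) v, Q (t • v) = t ^ 2 * Q v) (S : Submodule ℝ E) {x₀ : E}
    (hmin : ∀ v ∈ S, ψ x₀ ≤ ψ (x₀ + v) + Q v) {v : E} (hv : v ∈ S) :
    ψ x₀ ≤ ψ (x₀ + v) := by
  have hsmall : ∀ t ∈ Set.Ioc (0 : ℝ) 1, ψ x₀ ≤ ψ (x₀ + v) + t * Q v := by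
    rintro t ⟨ht0, ht1⟩
    have hpen := hmin (t • v) (S.smul_mem t hv)
    have hseg : ψ (x₀ + t • v) ≤ (1 - t) * ψ x₀ + t * ψ (x₀ + v) := by
      have := hψ.2 (Set.mem_univ x₀) (Set.mem_univ (x₀ + v)) (sub_nonneg.2 ht1) ht0.le
        (sub_add_cancel 1 t)
      rwa [show (1 - t) • x₀ + t • (x₀ + v) = x₀ + t • v by module] at this
    rw [hQ] at hpen
    nlinarith
  have hlim : Tendsto (fun t : ℝ => ψ (x₀ + v) + t * Q v) (𝓝[>] 0) (𝓝 (ψ (x₀ + v))) := by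
    have := (tendsto_const_nhds (x := ψ (x₀ + v))).add
      ((tendsto_id (x := 𝓝 (0 : ℝ))).mul_const (Q v))
    simpa using this.mono_left nhdsWithin_le_nhds
  exact ge_of_tendsto hlim (Filter.mem_of_superset (Ioc_mem_nhdsGT one_pos) hsmall)

lemma ConvexOn.slope_le_slope_of_isMinOn_hyperplane (hψ : ConvexOn ℝ Set.univ ψ)
    (ℓ : E →ₗ[ℝ] ℝ) {x₀ : E} (hmin : ∀ v, ℓ v = 0 → ψ x₀ ≤ ψ (x₀ + v)) {u w : E}
    (hu : 0 < ℓ u) (hw : ℓ w < 0) :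
    (ψ x₀ - ψ (x₀ + u)) / ℓ u ≤ (ψ (x₀ + w) - ψ x₀) / -ℓ w := by
  set p := -ℓ w / (ℓ u - ℓ w)
  set q := ℓ u / (ℓ u - ℓ w)
  have hpos : 0 < ℓ u - ℓ w := by linarith
  have hpq : p + q = 1 := by
    rw [← add_div, div_eq_one_iff_eq hpos.ne']
    ring
  have hcross : ℓ (p • u + q • w) = 0 := by
    simp only [map_add, map_smul, smul_eq_mul, p, q]
    field_simp
    ring
  have hconv := hψ.2 (Set.mem_univ (x₀ + u)) (Set.mem_univ (x₀ + w))
    (div_nonneg (by linarith) hpos.le) (div_nonneg hu.le hpos.le) hpq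
  rw [show p • (x₀ + u) + q • (x₀ + w) = x₀ + (p • u + q • w) by
    rw [smul_add, smul_add, add_add_add_comm, ← add_smul, hpq, one_smul]] at hconv
  have hcomb : ψ x₀ ≤ p * ψ (x₀ + u) + q * ψ (x₀ + w) := (hmin _ hcross).trans hconv
  rw [div_le_div_iff₀ hu (by linarith)]
  simp only [p, q, div_mul_eq_mul_div, ← add_div, le_div_iff₀ hpos] at hcomb
  nlinarith

lemma ConvexOn.exists_multiplier_of_isMinOn_hyperplane (hψ : ConvexOn ℝ Set.univ ψ)
    (ℓ : E →ₗ[ℝ] ℝ) {x₀ : E} (hmin : ∀ v, ℓ v = 0 → ψ x₀ ≤ ψ (x₀ + v)) :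
    ∃ μ : ℝ, ∀ v, ψ x₀ ≤ ψ (x₀ + v) + μ * ℓ v := by
  set D := {r | ∃ u, 0 < ℓ u ∧ (ψ x₀ - ψ (x₀ + u)) / ℓ u = r}
  refine ⟨sSup D, fun v => ?_⟩
  rcases lt_trichotomy (ℓ v) 0 with hv | hv | hv
  · have hneg : 0 < ℓ (-v) := by simpa using hv
    have hle : sSup D ≤ (ψ (x₀ + v) - ψ x₀) / -ℓ v :=
      csSup_le ⟨_, -v, hneg, rfl⟩ fun _ ⟨_, hu, hr⟩ =>
        hr ▸ hψ.slope_le_slope_of_isMinOn_hyperplane ℓ hmin hu hv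
    rw [le_div_iff₀ (by linarith)] at hle
    linarith
  · simpa [hv] using hmin v hv
  · have hneg : ℓ (-v) < 0 := by simpa using hv
    have hle : (ψ x₀ - ψ (x₀ + v)) / ℓ v ≤ sSup D :=
      le_csSup ⟨_, fun _ ⟨_, hu, hr⟩ =>
        hr ▸ hψ.slope_le_slope_of_isMinOn_hyperplane ℓ hmin hu hneg⟩ ⟨v, hv, rfl⟩
    rw [div_le_iff₀ hv] at hle
    linarith

end Convex

theorem stmt9_general {n N : ℕ} (hN : 0 < N) (blk : Fin n → Fin N)
    (Γt : Fin N → ℝ) (hΓt : ∀ i, 0 < Γt i)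
    (f h : En n → ℝ) (g : En n → En n)
    (Hc : Fin n → ℝ → ℝ) (hHconv : ∀ l, ConvexOn ℝ Set.univ (Hc l))
    (hsep : ∀ x : En n, h x = ∑ l, Hc l (x l))
    (a : En n)
    (xstar : En n)
    (dx : En n) (hdxfeas : ⟪a, dx⟫ = 0)
    (hdxmin : ∀ s : En n, ⟪a, s⟫ = 0 →
      f xstar + ⟪g xstar, dx⟫ + (N : ℝ) / 2 * blockNormSq blk Γt dx + h (xstar + dx) ≤
      f xstar + ⟪g xstar, s⟫ + (N : ℝ) / 2 * blockNormSq blk Γt s + h (xstar + s)) :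
    (∃ (lam : ℝ) (gh : En n), IsSubgradientAt h gh xstar ∧ g xstar + gh + lam • a = 0) ↔
      dx = 0 := by
  constructor
  · rintro ⟨lam, gh, hsub, hstat⟩
    obtain rfl : gh = -g xstar - lam • a := by
      rw [← sub_eq_zero, ← hstat]
      module
    have hsub_dx := hsub (xstar + dx)
    have hcompare := hdxmin 0 (inner_zero_right a)
    simp only [add_sub_cancel_left, inner_sub_left, inner_neg_left, real_inner_smul_left,
      hdxfeas, inner_zero_right, blockNormSq_zero, mul_zero, add_zero] at hsub_dx hcompare
    have hnonneg := blockNormSq_nonneg blk (fun i => (hΓt i).le) dx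
    refine (blockNormSq_eq_zero_iff blk hΓt).1 (le_antisymm ?_ hnonneg)
    exact nonpos_of_mul_nonpos_right (a := (N : ℝ) / 2) (by linarith) (by positivity)
  · rintro rfl
    set ℓ : En n →ₗ[ℝ] ℝ := innerₛₗ ℝ a
    set ψ : En n → ℝ := innerₛₗ ℝ (g xstar) + h
    have hψ : ConvexOn ℝ Set.univ ψ :=
      ((innerₛₗ ℝ (g xstar)).convexOn convex_univ).add
        (by simpa only [← funext hsep] using convexOn_sum_comp_coord hHconv)
    have hpen : ∀ v ∈ LinearMap.ker ℓ,
        ψ xstar ≤ ψ (xstar + v) + (N : ℝ) / 2 * blockNormSq blk Γt v := fun v hv => by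
      have := hdxmin v hv
      simp only [ψ, Pi.add_apply, coe_innerₛₗ_apply, inner_add_right, inner_zero_right,
        blockNormSq_zero, mul_zero, add_zero] at this ⊢
      linarith
    obtain ⟨μ, hμ⟩ := hψ.exists_multiplier_of_isMinOn_hyperplane ℓ fun v hv =>
      hψ.le_of_le_add_quadratic (fun t v => by rw [blockNormSq_smul]; ring) _ hpen hv
    refine ⟨μ, -g xstar - μ • a, fun y => ?_, by module⟩
    have := hμ (y - xstar)
    simp only [ψ, ℓ, Pi.add_apply, coe_innerₛₗ_apply, add_sub_cancel, inner_sub_left,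
      inner_neg_left, real_inner_smul_left, inner_sub_right] at this ⊢
    linarith

/-- For any block-weight vector `Γ̃` with positive entries, a feasible
point `x*` (i.e. `aᵀx* = b`) is a stationary point of `min {f(x) + h(x) : aᵀx = b}`
(i.e. there is `λ*` with `0 ∈ ∇f(x*) + ∂h(x*) + λ* a`) iff `d_{NΓ̃}(x*) = 0`, where
`d_{NΓ̃}(x*)` minimizes `s ↦ f(x*) + ⟨∇f(x*), s⟩ + (N/2)‖s‖_{Γ̃}² + h(x* + s)` over
`S = {s : aᵀs = 0}`.  Here `h` is convex, continuous and coordinatewise separable. -/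
theorem stmt9 {n N : ℕ} (hN : 0 < N) (blk : Fin n → Fin N)
    (Γt : Fin N → ℝ) (hΓt : ∀ i, 0 < Γt i)
    (f h : En n → ℝ) (g : En n → En n) (hg : ∀ x, HasGradientAt f (g x) x)
    (Hc : Fin n → ℝ → ℝ) (hHconv : ∀ l, ConvexOn ℝ Set.univ (Hc l))
    (hsep : ∀ x : En n, h x = ∑ l, Hc l (x l)) (hcont : Continuous h)
    (a : En n) (ha : a ≠ 0) (b : ℝ)
    (xstar : En n) (hfeas : ⟪a, xstar⟫ = b)
    (dx : En n) (hdxfeas : ⟪a, dx⟫ = 0)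
    (hdxmin : ∀ s : En n, ⟪a, s⟫ = 0 →
      f xstar + ⟪g xstar, dx⟫ + (N : ℝ) / 2 * blockNormSq blk Γt dx + h (xstar + dx) ≤
      f xstar + ⟪g xstar, s⟫ + (N : ℝ) / 2 * blockNormSq blk Γt s + h (xstar + s)) :
    (∃ (lam : ℝ) (gh : En n), IsSubgradientAt h gh xstar ∧ g xstar + gh + lam • a = 0) ↔
      dx = 0 :=
  stmt9_general hN blk Γt hΓt f h g Hc hHconv hsep a xstar dx hdxfeas hdxmin
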